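/- Let λ > 0, n ∈ ℕ with n ≥ 1, ε > 0, γ ∈ (0,1), and Δ ≥ log(1/γ)/(λn). Let w = (w_1,…,w_{n+1}) be drawn from the (n+1)-fold product of the exponential distribution with rate λ, set D = (w_1,…,w_n), D' = (w_1,…,w_{n−1},w_{n+1}), and let f(D) = (1/n)·Σ_{i=1}^n D_i be the sample mean. For c ∈ ℝ let Lap(c, Δ/ε) denote the Laplace measure on ℝ with location c and scale Δ/ε. Then the probability over w that for every measurable S ⊆ ℝ, Lap(f(D), Δ/ε)(S) ≤ e^ε · Lap(f(D'), Δ/ε)(S), is at least 1 − γ. -/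

import Mathlib

open MeasureTheory ProbabilityTheory Real
open scoped ENNReal BigOperators

/-- The one-dimensional Laplace measure with location `a` and scale `b`:
density `(1/(2b))·exp(−|x − a|/b)` with respect to Lebesgue measure. -/
noncomputable def laplaceMeasure (a b : ℝ) : Measure ℝ :=
  volume.withDensity fun x => ENNReal.ofReal ((2 * b)⁻¹ * Real.exp (-(|x - a| / b)))

open Set

/-! Replacing `D` by `D'` moves the sample mean by `(w_n - w_{n+1}) / n`, and by the triangle
inequality two Laplace densities of scale `b` whose locations are at most `ε b` apart differ
pointwise by a factor at most `e^ε`. So the privacy inequality can fail only when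
`|w_n - w_{n+1}| > nΔ`. For independent `X, Y ~ Exp(λ)`,
`P(X > Y + t) ≤ E[e^{-λ(Y + t)}] = e^{-λt} / 2`, hence `P(|X - Y| > nΔ) ≤ e^{-λnΔ} ≤ γ`. -/

lemma laplacePDF_le_exp_mul {c c' b ε : ℝ} (hb : 0 < b) (hcc' : |c - c'| ≤ ε * b) (x : ℝ) :
    (2 * b)⁻¹ * exp (-(|x - c| / b)) ≤ exp ε * ((2 * b)⁻¹ * exp (-(|x - c'| / b))) := by
  have htri : |x - c'| - |x - c| ≤ |c - c'| := by
    simpa using abs_sub_abs_le_abs_sub (x - c') (x - c)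
  have hquot : (|x - c'| - |x - c|) / b ≤ ε := by
    rw [div_le_iff₀ hb]
    linarith
  rw [mul_left_comm, ← exp_add]
  gcongr
  rw [sub_div] at hquot
  linarith

theorem laplaceMeasure_le_exp_mul {c c' b ε : ℝ} (hb : 0 < b) (hcc' : |c - c'| ≤ ε * b)
    (S : Set ℝ) : laplaceMeasure c b S ≤ ENNReal.ofReal (exp ε) * laplaceMeasure c' b S := by
  rw [laplaceMeasure, laplaceMeasure, withDensity_apply', withDensity_apply',
    ← lintegral_const_mul' _ _ ENNReal.ofReal_ne_top]
  refine lintegral_mono fun x => ?_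
  rw [← ENNReal.ofReal_mul (exp_pos ε).le]
  exact ENNReal.ofReal_le_ofReal (laplacePDF_le_exp_mul hb hcc' x)

lemma expMeasure_Ioi_le {r : ℝ} (hr : 0 < r) (c : ℝ) :
    expMeasure r (Ioi c) ≤ ENNReal.ofReal (exp (-(r * c))) := by
  have := isProbabilityMeasure_expMeasure hr
  rcases lt_or_ge c 0 with hc | hc
  · exact prob_le_one.trans (ENNReal.one_le_ofReal.2 (one_le_exp (by nlinarith)))
  · rw [← compl_Iic, prob_compl_eq_one_sub measurableSet_Iic, ← ofReal_cdf,
      cdf_expMeasure_eq hr, if_pos hc, ← ENNReal.ofReal_one,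
      ← ENNReal.ofReal_sub _ (sub_nonneg.2 (exp_le_one_iff.2 (by nlinarith)))]
    ring_nf
    exact le_rfl

lemma lintegral_exp_neg_expMeasure {r : ℝ} (hr : 0 < r) :
    ∫⁻ x, ENNReal.ofReal (exp (-(r * x))) ∂expMeasure r = 2⁻¹ := by
  have hpdf (x : ℝ) : exponentialPDF r x * ENNReal.ofReal (exp (-(r * x)))
      = 2⁻¹ * exponentialPDF (2 * r) x := by
    rcases lt_or_ge x 0 with hx | hx
    · simp [exponentialPDF_of_neg hx]
    · rw [exponentialPDF_of_nonneg hx, exponentialPDF_of_nonneg hx,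
        ← ENNReal.ofReal_mul (by positivity), ← ENNReal.ofReal_ofNat 2,
        ← ENNReal.ofReal_inv_of_pos two_pos, ← ENNReal.ofReal_mul (by positivity), mul_assoc,
        ← exp_add]
      ring_nf
  rw [show expMeasure r = volume.withDensity (exponentialPDF r) from rfl,
    lintegral_withDensity_eq_lintegral_mul _ (f := exponentialPDF r)
      (measurable_exponentialPDFReal r).ennreal_ofReal (by fun_prop)]
  simp only [Pi.mul_apply, hpdf]
  rw [lintegral_const_mul' _ _ (by simp), lintegral_exponentialPDF_eq_one (by positivity), mul_one]

lemma expMeasure_prod_setOf_add_lt_le {r : ℝ} (hr : 0 < r) (t : ℝ) :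
    (expMeasure r).prod (expMeasure r) {p | p.2 + t < p.1}
      ≤ ENNReal.ofReal (exp (-(r * t)) / 2) := by
  have := isProbabilityMeasure_expMeasure hr
  have hsection (y : ℝ) :
      (fun x => (x, y)) ⁻¹' {p : ℝ × ℝ | p.2 + t < p.1} = Ioi (y + t) := rfl
  rw [Measure.prod_apply_symm (measurableSet_lt (by fun_prop) (by fun_prop))]
  simp only [hsection]
  calc ∫⁻ y, expMeasure r (Ioi (y + t)) ∂expMeasure r
      ≤ ∫⁻ y, ENNReal.ofReal (exp (-(r * t))) * ENNReal.ofReal (exp (-(r * y)))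
          ∂expMeasure r := by
        refine lintegral_mono fun y => (expMeasure_Ioi_le hr _).trans_eq ?_
        rw [← ENNReal.ofReal_mul (exp_pos _).le, ← exp_add]
        ring_nf
    _ = ENNReal.ofReal (exp (-(r * t)) / 2) := by
        rw [lintegral_const_mul' _ _ ENNReal.ofReal_ne_top, lintegral_exp_neg_expMeasure hr,
          div_eq_mul_inv, ENNReal.ofReal_mul (exp_pos _).le, ENNReal.ofReal_inv_of_pos two_pos,
          ENNReal.ofReal_ofNat]

theorem expMeasure_prod_setOf_lt_abs_sub_le {r : ℝ} (hr : 0 < r) (t : ℝ) :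
    (expMeasure r).prod (expMeasure r) {p | t < |p.1 - p.2|}
      ≤ ENNReal.ofReal (exp (-(r * t))) := by
  have := isProbabilityMeasure_expMeasure hr
  set μ := (expMeasure r).prod (expMeasure r)
  have hsplit : {p : ℝ × ℝ | t < |p.1 - p.2|}
      ⊆ {p | p.2 + t < p.1} ∪ Prod.swap ⁻¹' {p | p.2 + t < p.1} := by
    intro p hp
    rcases lt_abs.1 (show t < |p.1 - p.2| from hp) with h | h
    · exact Or.inl (show p.2 + t < p.1 by linarith)
    · exact Or.inr (show p.1 + t < p.2 by linarith)
  have hswap : μ (Prod.swap ⁻¹' {p | p.2 + t < p.1}) = μ {p | p.2 + t < p.1} :=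
    Measure.measurePreserving_swap.measure_preimage
      (measurableSet_lt (by fun_prop) (by fun_prop)).nullMeasurableSet
  calc μ {p | t < |p.1 - p.2|}
      ≤ μ {p | p.2 + t < p.1} + μ (Prod.swap ⁻¹' {p | p.2 + t < p.1}) :=
        (measure_mono hsplit).trans (measure_union_le _ _)
    _ ≤ ENNReal.ofReal (exp (-(r * t)) / 2) + ENNReal.ofReal (exp (-(r * t)) / 2) := by
        rw [hswap]
        exact add_le_add (expMeasure_prod_setOf_add_lt_le hr t)
          (expMeasure_prod_setOf_add_lt_le hr t)
    _ = ENNReal.ofReal (exp (-(r * t))) := by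
        rw [← ENNReal.ofReal_add (by positivity) (by positivity), add_halves]

theorem Measure.map_prodMk_eval_pi {ι : Type*} [Fintype ι] {Ω : ι → Type*}
    [∀ i, MeasurableSpace (Ω i)] (μ : (i : ι) → Measure (Ω i))
    [∀ i, IsProbabilityMeasure (μ i)] {i j : ι} (hij : i ≠ j) :
    (Measure.pi μ).map (fun ω => (ω i, ω j)) = (μ i).prod (μ j) := by
  have hindep : (fun ω : (i : ι) → Ω i => ω i) ⟂ᵢ[Measure.pi μ] (fun ω => ω j) :=
    (iIndepFun_pi (X := fun _ => id) fun _ => aemeasurable_id).indepFun hij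
  rw [(indepFun_iff_map_prod_eq_prod_map_map
    (measurable_pi_apply i).aemeasurable (measurable_pi_apply j).aemeasurable).1 hindep,
    (measurePreserving_eval μ i).map_eq, (measurePreserving_eval μ j).map_eq]

lemma Fin.sum_sub_sum_ite_val_eq {n : ℕ} (g : Fin n → ℝ) (k : Fin n) (x : ℝ) :
    ∑ i, g i - ∑ i : Fin n, (if (i : ℕ) = k then x else g i) = g k - x := by
  rw [← Finset.sum_sub_distrib, Fintype.sum_eq_single k]
  · simp
  · intro i hi
    simp [Fin.val_ne_of_ne hi]

lemma one_sub_le_toReal_of_measure_compl_le {α : Type*} [MeasurableSpace α] {μ : Measure α}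
    [IsProbabilityMeasure μ] {s : Set α} {γ : ℝ} (hγ : 0 ≤ γ) (h : μ sᶜ ≤ ENNReal.ofReal γ) :
    1 - γ ≤ (μ s).toReal := by
  have hcover : 1 ≤ μ s + μ sᶜ := by
    simpa [measure_univ] using measure_union_le (μ := μ) s sᶜ
  have := ENNReal.toReal_mono (by finiteness) (hcover.trans (add_le_add le_rfl h))
  rw [ENNReal.toReal_add (measure_ne_top _ _) ENNReal.ofReal_ne_top,
    ENNReal.toReal_ofReal hγ] at this
  simpa using this

/-- The Laplace mechanism applied to the sample mean of exponentially
distributed data is `(ε,γ)`-randomly differentially private: for `Δ ≥ log(1/γ)/(λn)`, with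
probability at least `1 − γ` over `w ~ Exp(λ)^{⊗(n+1)}`, the `ε`-DP inequality holds between
the Laplace mechanism's outputs on the induced neighbouring pair. -/
theorem laplace_sampleMean_rdp
    (lam : ℝ) (hlam : 0 < lam) (n : ℕ) (hn : 1 ≤ n)
    (ε γ Δ : ℝ) (hε : 0 < ε) (hγ0 : 0 < γ) (hγ1 : γ < 1)
    (hΔ : Real.log (1/γ) / (lam * n) ≤ Δ)
    (A : Set (Fin (n + 1) → ℝ))
    (hAdef : A = {w : Fin (n + 1) → ℝ |
      ∀ S : Set ℝ, MeasurableSet S →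
        laplaceMeasure ((1 / (n : ℝ)) * ∑ i : Fin n, w i.castSucc) (Δ / ε) S ≤
          ENNReal.ofReal (Real.exp ε) *
            laplaceMeasure
              ((1 / (n : ℝ)) * ∑ i : Fin n,
                if (i : ℕ) = n - 1 then w (Fin.last n) else w i.castSucc) (Δ / ε) S}) :
    1 - γ ≤ ((Measure.pi fun _ : Fin (n + 1) => expMeasure lam) A).toReal := by
  have := isProbabilityMeasure_expMeasure hlam
  have hn0 : (0 : ℝ) < n := by exact_mod_cast hn
  have hΔ0 : 0 < Δ :=
    (div_pos (log_pos ((one_lt_div hγ0).2 hγ1)) (mul_pos hlam hn0)).trans_le hΔ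
  have hγ : exp (-(lam * (n * Δ))) ≤ γ := by
    rw [div_le_iff₀ (mul_pos hlam hn0), one_div, log_inv, neg_le] at hΔ
    exact (exp_le_exp.2 (by linarith)).trans_eq (exp_log hγ0)
  set a : Fin (n + 1) := (⟨n - 1, by omega⟩ : Fin n).castSucc
  have hfar : Aᶜ ⊆ {w | n * Δ < |w a - w (Fin.last n)|} := by
    intro w hw
    by_contra hnear
    refine hw (hAdef ▸ fun S _ => laplaceMeasure_le_exp_mul (div_pos hΔ0 hε) ?_ S)
    rw [← mul_sub, Fin.sum_sub_sum_ite_val_eq (fun i => w i.castSucc) ⟨n - 1, by omega⟩,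
      mul_div_cancel₀ _ hε.ne', abs_mul, abs_of_pos (by positivity), one_div_mul_eq_div,
      div_le_iff₀' hn0]
    exact not_lt.1 hnear
  refine one_sub_le_toReal_of_measure_compl_le hγ0.le ?_
  calc _ ≤ _ := measure_mono hfar
    _ = (expMeasure lam).prod (expMeasure lam) {p | n * Δ < |p.1 - p.2|} := by
        rw [← Measure.map_prodMk_eval_pi (fun _ => expMeasure lam) (Fin.castSucc_lt_last _).ne,
          Measure.map_apply (by fun_prop) (measurableSet_lt (by fun_prop) (by fun_prop))]
        rfl
    _ ≤ ENNReal.ofReal γ :=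
        (expMeasure_prod_setOf_lt_abs_sub_le hlam _).trans (ENNReal.ofReal_le_ofReal hγ)
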